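/- arXiv:math/0602311 — 5 statements merged into one kernel-verified Lean document; each statement's English description precedes it below -/
import Mathlib

section
/- Let φ, ψ ∈ C[1,∞) ∩ C²(1,∞) satisfy: φ is strictly increasing with φ(1) = 0; ψ is bounded, ψ(1) = 0, ψ ≥ 0 and ψ is not identically 0; and ψ(μ)/φ(μ) → 0 as μ → ∞. Suppose lim_{μ→1+} ψ(μ)/φ(μ) exists and is strictly smaller than Ψ* := sup_{μ>1} ψ(μ)/φ(μ). Then the set {μ > 1 : ψ(μ)/φ(μ) = Ψ*} is nonempty and has a largest element μ*, and for every 0 ≤ z ≤ φ(μ*), the value Ψ(z) := sup{∫ ψ dF : F ∈ ℱ, ∫ φ dF ≤ z} equals Ψ*·z and is attained by the mixture F = (1 − z/φ(μ*)) δ_1 + (z/φ(μ*)) δ_{μ*} of point masses at 1 and μ*. -/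
open MeasureTheory Filter Set
open scoped ENNReal

/-- `ℱ`: probability measures supported on `[1,∞)`. -/
def mixSet : Set (Measure ℝ) := {F | IsProbabilityMeasure F ∧ ∀ᵐ m ∂F, 1 ≤ m}

/-- The feasible set `{F ∈ ℱ : ∫ φ dF ≤ z}` for the envelope problem. -/
def constrSet (φ : ℝ → ℝ) (z : ℝ) : Set (Measure ℝ) :=
  {F | F ∈ mixSet ∧ ∫⁻ m, ENNReal.ofReal (φ m) ∂F ≤ ENNReal.ofReal z}

/-- The generalized convex envelope `Ψ(z) = sup {∫ ψ dF : F ∈ ℱ, ∫ φ dF ≤ z}`. -/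
noncomputable def PsiEnv (φ ψ : ℝ → ℝ) (z : ℝ) : ℝ≥0∞ :=
  ⨆ F ∈ constrSet φ z, ∫⁻ m, ENNReal.ofReal (ψ m) ∂F

/-- The two-point mixture `(1-ε) δ_a + ε δ_b`. -/
noncomputable def twoPoint (a b ε : ℝ) : Measure ℝ :=
  ENNReal.ofReal (1 - ε) • Measure.dirac a + ENNReal.ofReal ε • Measure.dirac b

/-- `Ψ* = sup_{μ > 1} ψ(μ)/φ(μ)`. -/
noncomputable def PsiStar (φ ψ : ℝ → ℝ) : ℝ := sSup {y | ∃ m, 1 < m ∧ y = ψ m / φ m}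

/-!
Since `ψ ≤ Ψ* φ` on `[1, ∞)`, every feasible `F` has `∫ ψ dF ≤ Ψ* ∫ φ dF ≤ Ψ* z`, while the
mixture of `δ_1` and a maximizer `μ*` of `ψ/φ` has `∫ φ = z` and `∫ ψ = Ψ* z` because both
functions vanish at `1`. The maximizers exist and have a largest element because `ψ/φ` is
continuous on `(1, ∞)` and its limits at `1⁺` and at `∞` lie below `Ψ*`: outside a compact
interval `ψ/φ` stays below one of its values, so the maximizers form a nonempty compact set.
-/

open Topology

lemma lintegral_twoPoint (a b ε : ℝ) (f : ℝ → ℝ≥0∞) :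
    ∫⁻ m, f m ∂(twoPoint a b ε) = ENNReal.ofReal (1 - ε) * f a + ENNReal.ofReal ε * f b := by
  simp [twoPoint, lintegral_add_measure, lintegral_smul_measure, lintegral_dirac]

lemma lintegral_ofReal_twoPoint_one {f : ℝ → ℝ} (hf : f 1 = 0) (b : ℝ) {ε : ℝ} (hε : 0 ≤ ε) :
    ∫⁻ m, ENNReal.ofReal (f m) ∂(twoPoint 1 b ε) = ENNReal.ofReal (ε * f b) := by
  rw [lintegral_twoPoint, hf, ENNReal.ofReal_zero, mul_zero, zero_add, ENNReal.ofReal_mul hε]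

lemma twoPoint_mem_mixSet {a b ε : ℝ} (ha : 1 ≤ a) (hb : 1 ≤ b) (hε₀ : 0 ≤ ε) (hε₁ : ε ≤ 1) :
    twoPoint a b ε ∈ mixSet := by
  refine ⟨⟨?_⟩, ?_⟩
  · simp only [twoPoint, Measure.add_apply, Measure.smul_apply, measure_univ, smul_eq_mul,
      mul_one]
    rw [← ENNReal.ofReal_add (by linarith) hε₀, sub_add_cancel, ENNReal.ofReal_one]
  · rw [twoPoint, ae_add_measure_iff]
    exact ⟨Measure.ae_smul_measure (by rwa [ae_dirac_eq]) _,
      Measure.ae_smul_measure (by rwa [ae_dirac_eq]) _⟩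

lemma psiEnv_le_ofReal_mul {φ ψ : ℝ → ℝ} {s : ℝ} (hs : 0 ≤ s)
    (hψφ : ∀ m, 1 ≤ m → ψ m ≤ s * φ m) (z : ℝ) :
    PsiEnv φ ψ z ≤ ENNReal.ofReal (s * z) := by
  refine iSup₂_le fun F hF => ?_
  calc ∫⁻ m, ENNReal.ofReal (ψ m) ∂F
      ≤ ∫⁻ m, ENNReal.ofReal s * ENNReal.ofReal (φ m) ∂F := by
        refine lintegral_mono_ae (hF.1.2.mono fun m hm => ?_)
        rw [← ENNReal.ofReal_mul hs]
        exact ENNReal.ofReal_le_ofReal (hψφ m hm)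
    _ = ENNReal.ofReal s * ∫⁻ m, ENNReal.ofReal (φ m) ∂F :=
        lintegral_const_mul' _ _ ENNReal.ofReal_ne_top
    _ ≤ ENNReal.ofReal s * ENNReal.ofReal z := mul_le_mul_right hF.2 _
    _ = ENNReal.ofReal (s * z) := (ENNReal.ofReal_mul hs).symm

theorem psiEnv_eq_ofReal_mul {φ ψ : ℝ → ℝ} {s b z : ℝ} (hs : 0 ≤ s)
    (hψφ : ∀ m, 1 ≤ m → ψ m ≤ s * φ m) (hφ1 : φ 1 = 0) (hψ1 : ψ 1 = 0)
    (hb : 1 ≤ b) (hφb : 0 < φ b) (hψb : ψ b = s * φ b) (hz₀ : 0 ≤ z) (hz : z ≤ φ b) :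
    PsiEnv φ ψ z = ENNReal.ofReal (s * z) ∧
      twoPoint 1 b (z / φ b) ∈ constrSet φ z ∧
      ∫⁻ m, ENNReal.ofReal (ψ m) ∂(twoPoint 1 b (z / φ b)) = ENNReal.ofReal (s * z) := by
  have hε₀ : 0 ≤ z / φ b := div_nonneg hz₀ hφb.le
  have hφint : ∫⁻ m, ENNReal.ofReal (φ m) ∂(twoPoint 1 b (z / φ b)) = ENNReal.ofReal z := by
    rw [lintegral_ofReal_twoPoint_one hφ1 b hε₀, div_mul_cancel₀ z hφb.ne']
  have hψint : ∫⁻ m, ENNReal.ofReal (ψ m) ∂(twoPoint 1 b (z / φ b)) =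
      ENNReal.ofReal (s * z) := by
    rw [lintegral_ofReal_twoPoint_one hψ1 b hε₀, hψb]
    congr 1
    field_simp
  have hmem : twoPoint 1 b (z / φ b) ∈ constrSet φ z :=
    ⟨twoPoint_mem_mixSet le_rfl hb hε₀ ((div_le_one hφb).2 hz), hφint.le⟩
  refine ⟨le_antisymm (psiEnv_le_ofReal_mul hs hψφ z) ?_, hmem, hψint⟩
  rw [← hψint]
  exact le_iSup₂_of_le (twoPoint 1 b (z / φ b)) hmem le_rfl

section Maximizers

variable {g : ℝ → ℝ} {a x L L' : ℝ}

lemma exists_Icc_forall_lt_of_tendsto (hga : Tendsto g (𝓝[>] a) (𝓝 L))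
    (hgtop : Tendsto g atTop (𝓝 L')) (hx : a < x) (hL : L < g x) (hL' : L' < g x) :
    ∃ p q, a < p ∧ x ∈ Icc p q ∧ ∀ y, a < y → y ∉ Icc p q → g y < g x := by
  obtain ⟨p, hp, hIoo⟩ := mem_nhdsGT_iff_exists_Ioo_subset.1 (hga.eventually_lt_const hL)
  obtain ⟨q, hq⟩ := eventually_atTop.1 (hgtop.eventually_lt_const hL')
  refine ⟨min p x, max q x, lt_min hp hx, ⟨min_le_right _ _, le_max_right _ _⟩, ?_⟩
  intro y hay hy
  rcases not_and_or.1 hy with hy | hy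
  · exact hIoo ⟨hay, (lt_min_iff.1 (not_le.1 hy)).1⟩
  · exact hq y (le_max_left q x |>.trans (not_le.1 hy).le)

theorem ContinuousOn.exists_isGreatest_isMaxOn_Ioi (hg : ContinuousOn g (Ioi a))
    (hga : Tendsto g (𝓝[>] a) (𝓝 L)) (hgtop : Tendsto g atTop (𝓝 L'))
    (hx : a < x) (hL : L < g x) (hL' : L' < g x) :
    ∃ m, IsGreatest {y | a < y ∧ IsMaxOn g (Ioi a) y} m := by
  obtain ⟨p, q, hap, hxK, hout⟩ := exists_Icc_forall_lt_of_tendsto hga hgtop hx hL hL'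
  have hKsub : Icc p q ⊆ Ioi a := fun y hy => hap.trans_le hy.1
  have hgK : ContinuousOn g (Icc p q) := hg.mono hKsub
  obtain ⟨m₀, hm₀K, hm₀max⟩ := isCompact_Icc.exists_isMaxOn ⟨x, hxK⟩ hgK
  have hm₀ : IsMaxOn g (Ioi a) m₀ := fun y (hy : a < y) => by
    by_cases hyK : y ∈ Icc p q
    · exact hm₀max hyK
    · exact ((hout y hy hyK).trans_le (hm₀max hxK)).le
  have hmax_mem : ∀ y, a < y → IsMaxOn g (Ioi a) y → y ∈ Icc p q ∩ g ⁻¹' {g m₀} := by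
    intro y hy hymax
    have hgy : g y = g m₀ := le_antisymm (hm₀ hy) (hymax (hKsub hm₀K))
    refine ⟨?_, hgy⟩
    by_contra hyK
    exact (hout y hy hyK).not_ge (hgy ▸ hm₀max hxK)
  have hM : IsCompact (Icc p q ∩ g ⁻¹' {g m₀}) :=
    isCompact_Icc.of_isClosed_subset
      (hgK.preimage_isClosed_of_isClosed isClosed_Icc isClosed_singleton) inter_subset_left
  obtain ⟨m, ⟨hmK, hgm⟩, hm_ge⟩ := hM.exists_isGreatest ⟨m₀, hm₀K, rfl⟩
  refine ⟨m, ⟨hKsub hmK, isMaxOn_iff.2 fun y hy => ?_⟩,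
    fun y ⟨hy, hymax⟩ => hm_ge (hmax_mem y hy hymax)⟩
  rw [show g m = g m₀ from hgm]
  exact hm₀ hy

end Maximizers

lemma psiStar_eq_sSup_image (φ ψ : ℝ → ℝ) :
    PsiStar φ ψ = sSup ((fun m => ψ m / φ m) '' Ioi 1) := by
  simp only [PsiStar, image, mem_Ioi, eq_comm]

theorem envelope_of_finite_limit_general (φ ψ : ℝ → ℝ)
    (hφc : ContinuousOn φ (Set.Ici 1)) (hψc : ContinuousOn ψ (Set.Ici 1))
    (hφmono : StrictMonoOn φ (Set.Ici 1)) (hφ1 : φ 1 = 0) (hψ1 : ψ 1 = 0)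
    (hψnonneg : ∀ m, 1 ≤ m → 0 ≤ ψ m)
    (hlim_top : Tendsto (fun m => ψ m / φ m) atTop (nhds 0))
    (L : ℝ) (hL : Tendsto (fun m => ψ m / φ m) (nhdsWithin 1 (Set.Ioi 1)) (nhds L))
    (hLlt : L < PsiStar φ ψ) :
    ∃ mstar, (1 < mstar ∧ ψ mstar / φ mstar = PsiStar φ ψ) ∧
      (∀ m, 1 < m → ψ m / φ m = PsiStar φ ψ → m ≤ mstar) ∧
      ∀ z, 0 ≤ z → z ≤ φ mstar →
        PsiEnv φ ψ z = ENNReal.ofReal (PsiStar φ ψ * z) ∧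
        twoPoint 1 mstar (z / φ mstar) ∈ constrSet φ z ∧
        ∫⁻ m, ENNReal.ofReal (ψ m) ∂(twoPoint 1 mstar (z / φ mstar)) =
          ENNReal.ofReal (PsiStar φ ψ * z) := by
  set g := fun m => ψ m / φ m
  have hφpos : ∀ m, 1 < m → 0 < φ m := fun m hm =>
    hφ1 ▸ hφmono (mem_Ici.2 le_rfl) (mem_Ici.2 hm.le) hm
  have hg : ContinuousOn g (Ioi 1) :=
    (hψc.mono Ioi_subset_Ici_self).div (hφc.mono Ioi_subset_Ici_self) fun m hm => (hφpos m hm).ne'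
  have hL₀ : 0 ≤ L := ge_of_tendsto hL <| eventually_nhdsWithin_of_forall fun m (hm : 1 < m) =>
    div_nonneg (hψnonneg m hm.le) (hφpos m hm).le
  rw [psiStar_eq_sSup_image] at hLlt ⊢
  obtain ⟨_, ⟨x, hx, rfl⟩, hLx⟩ := exists_lt_of_lt_csSup (nonempty_Ioi.image g) hLlt
  obtain ⟨mstar, ⟨hms, hmsmax⟩, hms_ge⟩ :=
    hg.exists_isGreatest_isMaxOn_Ioi hL hlim_top hx hLx (hL₀.trans_lt hLx)
  have hsup : sSup (g '' Ioi 1) = g mstar :=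
    IsGreatest.csSup_eq ⟨mem_image_of_mem g hms, forall_mem_image.2 fun y hy => hmsmax hy⟩
  have hψφ : ∀ m, 1 ≤ m → ψ m ≤ g mstar * φ m := by
    intro m hm
    rcases hm.eq_or_lt with rfl | hm
    · rw [hψ1, hφ1, mul_zero]
    · exact (div_le_iff₀ (hφpos m hm)).1 (hmsmax hm)
  rw [hsup]
  refine ⟨mstar, ⟨hms, rfl⟩,
    fun m hm hgm => hms_ge ⟨hm, isMaxOn_iff.2 fun y hy => (hmsmax hy).trans_eq hgm.symm⟩,
    fun z hz₀ hz => ?_⟩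
  exact psiEnv_eq_ofReal_mul (hL₀.trans hLx.le |>.trans (hmsmax hx)) hψφ hφ1 hψ1 hms.le
    (hφpos mstar hms) (div_mul_cancel₀ _ (hφpos mstar hms).ne').symm hz₀ hz

/-- Lemma 3.1: under the stated conditions on `φ, ψ` and assuming
`lim_{μ→1+} ψ(μ)/φ(μ)` exists and is `< Ψ*`, the set `{μ > 1 : ψ(μ)/φ(μ) = Ψ*}` has a
largest element `μ*`, and for `0 ≤ z ≤ φ(μ*)` the envelope satisfies `Ψ(z) = Ψ* · z`,
attained by the two-point mixture `(1 - z/φ(μ*)) δ_1 + (z/φ(μ*)) δ_{μ*}`. -/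
theorem envelope_of_finite_limit (φ ψ : ℝ → ℝ)
    (hφc : ContinuousOn φ (Set.Ici 1)) (hφ2 : ContDiffOn ℝ 2 φ (Set.Ioi 1))
    (hψc : ContinuousOn ψ (Set.Ici 1)) (hψ2 : ContDiffOn ℝ 2 ψ (Set.Ioi 1))
    (hφmono : StrictMonoOn φ (Set.Ici 1)) (hφ1 : φ 1 = 0)
    (hψbdd : ∃ C : ℝ, ∀ m, 1 ≤ m → |ψ m| ≤ C) (hψ1 : ψ 1 = 0)
    (hψnonneg : ∀ m, 1 ≤ m → 0 ≤ ψ m) (hψne : ∃ m, 1 ≤ m ∧ ψ m ≠ 0)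
    (hlim_top : Tendsto (fun m => ψ m / φ m) atTop (nhds 0))
    (L : ℝ) (hL : Tendsto (fun m => ψ m / φ m) (nhdsWithin 1 (Set.Ioi 1)) (nhds L))
    (hLlt : L < PsiStar φ ψ) :
    ∃ mstar, (1 < mstar ∧ ψ mstar / φ mstar = PsiStar φ ψ) ∧
      (∀ m, 1 < m → ψ m / φ m = PsiStar φ ψ → m ≤ mstar) ∧
      ∀ z, 0 ≤ z → z ≤ φ mstar →
        PsiEnv φ ψ z = ENNReal.ofReal (PsiStar φ ψ * z) ∧
        twoPoint 1 mstar (z / φ mstar) ∈ constrSet φ z ∧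
        ∫⁻ m, ENNReal.ofReal (ψ m) ∂(twoPoint 1 mstar (z / φ mstar)) =
          ENNReal.ofReal (PsiStar φ ψ * z) :=
  envelope_of_finite_limit_general φ ψ hφc hψc hφmono hφ1 hψ1 hψnonneg hlim_top L hL hLlt
end

section
/- Fix 0 < q < 1. For every G ∈ 𝒢 with G ≠ E, the equation Ḡ(t) = e^{-t}/q has a unique solution t in [0,∞), where Ḡ = 1 − G; consequently T_q(G) is this unique solution. -/
open MeasureTheory Filter Set
open scoped ENNReal

/-- The cdf of the scale mixture of exponentials `E#F`:
`G(t) = ∫ (1 − e^{−t/μ}) dF(μ)` for `t ≥ 0`, and `0` for `t < 0`. -/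
noncomputable def mixCdf (F : Measure ℝ) : ℝ → ℝ :=
  fun t => if 0 ≤ t then ∫ m, (1 - Real.exp (-t / m)) ∂F else 0

/-- The cdf of `Exp(1)`. -/
noncomputable def Ecdf : ℝ → ℝ := fun t => if 0 ≤ t then 1 - Real.exp (-t) else 0

/-- `𝒢`: the scale mixtures of exponentials. -/
def scaleMixtures : Set (ℝ → ℝ) := {G | ∃ F ∈ mixSet, G = mixCdf F}

/-- The FDR functional `T_q(G) = inf {t ≥ 0 : 1 − G(t) ≥ e^{−t}/q}` (`= ∞` if no such `t`),
valued in `ℝ≥0∞`. -/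
noncomputable def Tq (q : ℝ) (G : ℝ → ℝ) : ℝ≥0∞ :=
  sInf (ENNReal.ofReal '' {t : ℝ | 0 ≤ t ∧ Real.exp (-t) / q ≤ 1 - G t})

/-!
For `t ≥ 0` we have `e^{-t/μ} = e^{-t} e^{t(1 - μ⁻¹)}`, so `1 - G(t) = e^{-t} M(t)` where `M` is the
moment generating function of `X = 1 - μ⁻¹` under `F`, and the crossing equation becomes
`M(t) = 1/q`. Since `X ≥ 0`, and `X > 0` with positive probability because `G ≠ E`, the function `M`
is continuous, strictly increasing and unbounded, with `M(0) = 1 < 1/q`. Hence it crosses `1/q`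
exactly once, at some `t₀`, and the set whose infimum defines `T_q(G)` is `[t₀, ∞)`.
-/

open ProbabilityTheory Real

namespace ProbabilityTheory

variable {Ω : Type*} {mΩ : MeasurableSpace Ω} {X : Ω → ℝ} {μ : Measure Ω}

lemma strictMono_mgf_of_nonneg (hX : 0 ≤ᵐ[μ] X) (hpos : 0 < μ {ω | 0 < X ω})
    (h_int : ∀ t, Integrable (fun ω ↦ exp (t * X ω)) μ) : StrictMono (mgf X μ) := by
  intro u v huv
  have h_nonneg : 0 ≤ᵐ[μ] fun ω ↦ exp (v * X ω) - exp (u * X ω) := by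
    filter_upwards [hX] with ω hω
    simpa using mul_le_mul_of_nonneg_right huv.le hω
  have h_supp : {ω | 0 < X ω} ⊆ Function.support fun ω ↦ exp (v * X ω) - exp (u * X ω) := by
    intro ω hω
    simpa [sub_eq_zero] using (mul_lt_mul_of_pos_right huv hω).ne'
  have h_gap : 0 < ∫ ω, (exp (v * X ω) - exp (u * X ω)) ∂μ :=
    (integral_pos_iff_support_of_nonneg_ae h_nonneg ((h_int v).sub (h_int u))).2
      (hpos.trans_le (measure_mono h_supp))
  rw [integral_sub (h_int v) (h_int u)] at h_gap
  exact sub_pos.1 h_gap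

lemma exists_pos_measure_setOf_le (hpos : 0 < μ {ω | 0 < X ω}) :
    ∃ δ > 0, 0 < μ {ω | δ ≤ X ω} := by
  by_contra! h
  have h_union : {ω | 0 < X ω} = ⋃ n : ℕ, {ω | 1 / ((n : ℝ) + 1) ≤ X ω} := by
    ext ω
    simp only [mem_ofPred_eq, mem_iUnion]
    refine ⟨fun hω ↦ ?_, fun ⟨n, hn⟩ ↦ (Nat.one_div_pos_of_nat).trans_le hn⟩
    obtain ⟨n, hn⟩ := exists_nat_one_div_lt hω
    exact ⟨n, hn.le⟩
  rw [h_union, measure_iUnion_null fun n ↦ nonpos_iff_eq_zero.1 (h _ (by positivity))] at hpos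
  exact hpos.false

lemma tendsto_mgf_atTop [IsFiniteMeasure μ] (hpos : 0 < μ {ω | 0 < X ω})
    (h_int : ∀ t, Integrable (fun ω ↦ exp (t * X ω)) μ) :
    Tendsto (mgf X μ) atTop atTop := by
  obtain ⟨δ, hδ, hμδ⟩ := exists_pos_measure_setOf_le hpos
  have hc : 0 < μ.real {ω | δ ≤ X ω} := ENNReal.toReal_pos hμδ.ne' (measure_ne_top _ _)
  have h_lower : ∀ t, 0 ≤ t → exp (t * δ) * μ.real {ω | δ ≤ X ω} ≤ mgf X μ t := fun t ht ↦ by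
    have := measure_ge_le_exp_mul_mgf δ ht (h_int t)
    rwa [neg_mul, exp_neg, inv_mul_eq_div, le_div_iff₀' (exp_pos _)] at this
  refine tendsto_atTop_mono' _ (eventually_ge_atTop 0 |>.mono h_lower) ?_
  exact (tendsto_exp_atTop.comp (tendsto_id.atTop_mul_const hδ)).atTop_mul_const hc

end ProbabilityTheory

lemma Tq_eq_ofReal_of_forall_le_iff {q t₀ : ℝ} {G : ℝ → ℝ} (ht₀ : 0 ≤ t₀)
    (h : ∀ t, 0 ≤ t → (exp (-t) / q ≤ 1 - G t ↔ t₀ ≤ t)) : Tq q G = ENNReal.ofReal t₀ := by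
  have h_set : {t : ℝ | 0 ≤ t ∧ exp (-t) / q ≤ 1 - G t} = Ici t₀ := by
    ext t
    exact ⟨fun ⟨ht, hle⟩ ↦ (h t ht).1 hle,
      fun hle ↦ ⟨ht₀.trans hle, (h t (ht₀.trans hle)).2 hle⟩⟩
  rw [Tq, h_set]
  exact (ENNReal.ofReal_mono.map_isLeast isLeast_Ici).isGLB.sInf_eq

section ScaleMixture

variable {F : Measure ℝ}

lemma integrable_exp_mul_one_sub_inv (hF : F ∈ mixSet) (t : ℝ) :
    Integrable (fun m : ℝ ↦ exp (t * (1 - m⁻¹))) F := by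
  have := hF.1
  refine integrable_exp_mul_of_mem_Icc (a := 0) (b := 1) (by fun_prop) ?_
  filter_upwards [hF.2] with m hm
  exact ⟨sub_nonneg.2 (inv_le_one_of_one_le₀ hm), by linarith [inv_nonneg.2 (zero_le_one.trans hm)]⟩

lemma one_sub_mixCdf (hF : F ∈ mixSet) {t : ℝ} (ht : 0 ≤ t) :
    1 - mixCdf F t = exp (-t) * mgf (fun m ↦ 1 - m⁻¹) F t := by
  have := hF.1
  have h_split : (fun m : ℝ ↦ 1 - exp (-t / m)) = fun m ↦ 1 - exp (-t) * exp (t * (1 - m⁻¹)) := by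
    ext m
    rw [← exp_add, div_eq_mul_inv]
    ring_nf
  rw [mixCdf, if_pos ht, h_split, integral_sub (integrable_const 1)
    ((integrable_exp_mul_one_sub_inv hF t).const_mul _), integral_const_mul, mgf]
  simp

lemma mixCdf_eq_Ecdf_of_ae_eq_one [IsProbabilityMeasure F] (h : ∀ᵐ m ∂F, m = 1) :
    mixCdf F = Ecdf := by
  ext t
  unfold mixCdf Ecdf
  split_ifs
  · rw [integral_congr_ae (g := fun _ ↦ 1 - exp (-t))
      (h.mono fun m hm ↦ by simp only [hm, div_one])]
    simp
  · rfl

lemma measure_one_sub_inv_pos (hF : F ∈ mixSet) (hne : mixCdf F ≠ Ecdf) :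
    0 < F {m | 0 < 1 - m⁻¹} := by
  have := hF.1
  refine pos_iff_ne_zero.2 fun h ↦ hne (mixCdf_eq_Ecdf_of_ae_eq_one ?_)
  filter_upwards [hF.2, measure_eq_zero_iff_ae_notMem.1 h] with m hm hm'
  simp only [sub_pos, not_lt] at hm'
  exact le_antisymm (by simpa using one_le_inv_iff₀.1 hm' |>.2) hm

lemma strictMono_mgf_one_sub_inv (hF : F ∈ mixSet) (hne : mixCdf F ≠ Ecdf) :
    StrictMono (mgf (fun m : ℝ ↦ 1 - m⁻¹) F) :=
  strictMono_mgf_of_nonneg (hF.2.mono fun _ hm ↦ sub_nonneg.2 (inv_le_one_of_one_le₀ hm))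
    (measure_one_sub_inv_pos hF hne) (integrable_exp_mul_one_sub_inv hF)

lemma exists_mgf_one_sub_inv_eq (hF : F ∈ mixSet) (hne : mixCdf F ≠ Ecdf) {c : ℝ} (hc : 1 ≤ c) :
    ∃ t ≥ 0, mgf (fun m : ℝ ↦ 1 - m⁻¹) F t = c := by
  have := hF.1
  have h_cont := continuous_mgf (integrable_exp_mul_one_sub_inv hF)
  have h_top := tendsto_mgf_atTop (measure_one_sub_inv_pos hF hne)
    (integrable_exp_mul_one_sub_inv hF)
  exact intermediate_value_Ici h_cont.continuousOn h_top (by rwa [mem_Ici, mgf_zero])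

end ScaleMixture

/-- Lemma 4.1: for `0 < q < 1` and `G ∈ 𝒢`, `G ≠ E`, the equation
`1 − G(t) = e^{−t}/q` has a unique solution `t ∈ [0,∞)`, and `T_q(G)` equals this solution. -/
theorem Tq_unique_crossing (q : ℝ) (hq : 0 < q) (hq1 : q < 1) (G : ℝ → ℝ)
    (hG : G ∈ scaleMixtures) (hne : G ≠ Ecdf) :
    (∃! t : ℝ, 0 ≤ t ∧ 1 - G t = Real.exp (-t) / q) ∧
    ∀ t : ℝ, 0 ≤ t → 1 - G t = Real.exp (-t) / q → Tq q G = ENNReal.ofReal t := by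
  obtain ⟨F, hF, rfl⟩ := hG
  have h_mono := strictMono_mgf_one_sub_inv hF hne
  obtain ⟨t₀, ht₀, h_cross⟩ := exists_mgf_one_sub_inv_eq hF hne ((one_le_inv₀ hq).2 hq1.le)
  have h_eq : ∀ t, 0 ≤ t → (1 - mixCdf F t = exp (-t) / q ↔ t = t₀) := fun t ht ↦ by
    rw [one_sub_mixCdf hF ht, div_eq_mul_inv, mul_right_inj' (exp_pos _).ne', ← h_cross,
      h_mono.injective.eq_iff]
  have h_le : ∀ t, 0 ≤ t → (exp (-t) / q ≤ 1 - mixCdf F t ↔ t₀ ≤ t) := fun t ht ↦ by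
    rw [one_sub_mixCdf hF ht, div_eq_mul_inv, mul_le_mul_iff_right₀ (exp_pos _), ← h_cross,
      h_mono.le_iff_le]
  refine ⟨⟨t₀, ⟨ht₀, (h_eq t₀ ht₀).2 rfl⟩, fun t ht ↦ (h_eq t ht.1).1 ht.2⟩, fun t ht h ↦ ?_⟩
  rw [(h_eq t ht).1 h]
  exact Tq_eq_ofReal_of_forall_le_iff ht₀ h_le
end

section
/- Fix 0 < q < 1. For every G ∈ 𝒢 with G ≠ E, the FDR functional satisfies −log( (q/(1−q)) ‖G − E‖ ) ≤ T_q(G) ≤ ((1−q)/q) · 1/‖G − E‖, where ‖G − E‖ = sup_t |G(t) − E(t)| is the Kolmogorov–Smirnov distance. -/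
/-! For `G = E#F` the difference `G(t) − E(t) = ∫ (e^{-t} − e^{-t/μ}) dF(μ)` has an integrand
between `0` and `1 − 1/μ` (convexity of `exp`), so `‖G − E‖ ≤ ∫ (1 − 1/μ) dF` is finite.
Any `t` in the level set satisfies `e^{-t}/q ≤ Ḡ(t) ≤ e^{-t} + ‖G − E‖`, which is the lower
bound. Conversely `e^{-t/μ} ≥ e^{-t} (1 + t (1 − 1/μ))` integrates to
`Ḡ(t) ≥ e^{-t} (1 + t ∫ (1 − 1/μ) dF) ≥ e^{-t} (1 + t ‖G − E‖)`, and the right-hand side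
equals `e^{-t}/q` at `t = (1 − q)/(q ‖G − E‖)`, which is therefore in the level set. -/

open MeasureTheory Filter Set
open scoped ENNReal

/-- The Kolmogorov–Smirnov distance `‖G − G'‖ = sup_t |G(t) − G'(t)|`. -/
noncomputable def ksDist (G G' : ℝ → ℝ) : ℝ := ⨆ t : ℝ, |G t - G' t|

open Real

theorem abs_exp_neg_sub_exp_neg_div_le {t m : ℝ} (ht : 0 ≤ t) (hm : 1 ≤ m) :
    |exp (-t) - exp (-t / m)| ≤ 1 - m⁻¹ := by
  have hm0 : 0 < m := one_pos.trans_le hm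
  have hinv : m⁻¹ ≤ 1 := inv_le_one_of_one_le₀ hm
  have hmono : exp (-t) ≤ exp (-t / m) :=
    exp_le_exp.2 (by rw [neg_div, neg_le_neg_iff]; exact div_le_self ht hm)
  -- `-t / m` is the convex combination `m⁻¹ • (-t) + (1 - m⁻¹) • 0`
  have hconv := convexOn_exp.2 (mem_univ (-t)) (mem_univ 0) (inv_nonneg.2 hm0.le)
    (sub_nonneg.2 hinv) (add_sub_cancel m⁻¹ 1)
  simp only [smul_eq_mul, mul_zero, add_zero, exp_zero, mul_one] at hconv
  rw [show m⁻¹ * -t = -t / m by ring] at hconv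
  rw [abs_sub_comm, abs_of_nonneg (sub_nonneg.2 hmono)]
  nlinarith [mul_nonneg (sub_nonneg.2 hinv) (exp_pos (-t)).le]

theorem exp_neg_mul_le_exp_neg_div (t m : ℝ) :
    exp (-t) * (1 + t * (1 - m⁻¹)) ≤ exp (-t / m) := by
  calc exp (-t) * (1 + t * (1 - m⁻¹))
      ≤ exp (-t) * exp (t * (1 - m⁻¹)) := by
        gcongr; linarith [add_one_le_exp (t * (1 - m⁻¹))]
    _ = exp (-t / m) := by rw [← exp_add]; ring_nf

theorem le_ksDist {G G' : ℝ → ℝ} (h : BddAbove (range fun t => |G t - G' t|)) (t : ℝ) :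
    |G t - G' t| ≤ ksDist G G' :=
  le_ciSup h t

theorem ksDist_le {G G' : ℝ → ℝ} {C : ℝ} (h : ∀ t, |G t - G' t| ≤ C) : ksDist G G' ≤ C :=
  ciSup_le h

theorem ksDist_pos {G G' : ℝ → ℝ} (h : BddAbove (range fun t => |G t - G' t|))
    (hne : G ≠ G') : 0 < ksDist G G' := by
  obtain ⟨t, ht⟩ := Function.ne_iff.1 hne
  exact (abs_pos.2 (sub_ne_zero.2 ht)).trans_le (le_ksDist h t)

section Tq

variable {q : ℝ} {G : ℝ → ℝ}

theorem ofReal_neg_log_le_Tq (hq : 0 < q) (hq1 : q < 1) {δ : ℝ}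
    (hG : ∀ t, 0 ≤ t → 1 - G t ≤ exp (-t) + δ) :
    ENNReal.ofReal (-log (q / (1 - q) * δ)) ≤ Tq q G := by
  refine le_sInf ?_
  rintro _ ⟨t, ⟨ht, hlevel⟩, rfl⟩
  refine ENNReal.ofReal_le_ofReal ?_
  have hq1' : 0 < 1 - q := sub_pos.2 hq1
  have hexp : exp (-t) * (1 - q) ≤ q * δ := by
    have := hlevel.trans (hG t ht)
    rw [div_le_iff₀ hq] at this
    linarith
  have hδ : 0 < q * δ := (mul_pos (exp_pos _) hq1').trans_le hexp
  rw [neg_le, le_log_iff_exp_le (by rw [div_mul_eq_mul_div]; exact div_pos hδ hq1'),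
    div_mul_eq_mul_div, le_div_iff₀ hq1']
  exact hexp

theorem Tq_le_ofReal (hq : 0 < q) (hq1 : q < 1) {δ : ℝ} (hδ : 0 < δ)
    (hG : ∀ t, 0 ≤ t → exp (-t) * (1 + t * δ) ≤ 1 - G t) :
    Tq q G ≤ ENNReal.ofReal ((1 - q) / q / δ) := by
  set t := (1 - q) / q / δ
  have ht : 0 ≤ t := div_nonneg (div_nonneg (sub_pos.2 hq1).le hq.le) hδ.le
  refine sInf_le ⟨t, ⟨ht, ?_⟩, rfl⟩
  have htδ : 1 + t * δ = 1 / q := by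
    simp only [t]; field_simp; ring
  simpa [htδ, div_eq_mul_one_div (exp (-t))] using hG t ht

end Tq

section Mixture

variable {F : Measure ℝ} (hF : ∀ᵐ m ∂F, 1 ≤ m)
include hF

theorem integrable_exp_neg_div [IsFiniteMeasure F] {t : ℝ} (ht : 0 ≤ t) :
    Integrable (fun m : ℝ => exp (-t / m)) F := by
  refine Integrable.mono' (integrable_const 1)
    (measurable_const.div measurable_id).exp.aestronglyMeasurable ?_
  filter_upwards [hF] with m hm
  rw [norm_of_nonneg (exp_pos _).le, exp_le_one_iff]
  exact div_nonpos_of_nonpos_of_nonneg (neg_nonpos.2 ht) (zero_le_one.trans hm)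

theorem integrable_one_sub_inv [IsFiniteMeasure F] : Integrable (fun m : ℝ => 1 - m⁻¹) F := by
  refine Integrable.mono' (integrable_const 1)
    (measurable_const.sub measurable_inv).aestronglyMeasurable ?_
  filter_upwards [hF] with m hm
  rw [norm_of_nonneg (sub_nonneg.2 (inv_le_one_of_one_le₀ hm))]
  linarith [inv_nonneg.2 (zero_le_one.trans hm)]

variable [IsProbabilityMeasure F]

theorem mixCdf_eq {t : ℝ} (ht : 0 ≤ t) : mixCdf F t = 1 - ∫ m, exp (-t / m) ∂F := by
  rw [mixCdf, if_pos ht, integral_sub (integrable_const 1) (integrable_exp_neg_div hF ht)]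
  simp

theorem mixCdf_sub_Ecdf {t : ℝ} (ht : 0 ≤ t) :
    mixCdf F t - Ecdf t = ∫ m, (exp (-t) - exp (-t / m)) ∂F := by
  rw [mixCdf_eq hF ht, Ecdf, if_pos ht,
    integral_sub (integrable_const _) (integrable_exp_neg_div hF ht)]
  simp

theorem abs_mixCdf_sub_Ecdf_le (t : ℝ) :
    |mixCdf F t - Ecdf t| ≤ ∫ m, (1 - m⁻¹) ∂F := by
  rcases le_or_gt 0 t with ht | ht
  · rw [mixCdf_sub_Ecdf hF ht, ← Real.norm_eq_abs]
    refine norm_integral_le_of_norm_le (integrable_one_sub_inv hF) ?_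
    filter_upwards [hF] with m hm
    exact abs_exp_neg_sub_exp_neg_div_le ht hm
  · simp only [mixCdf, Ecdf, if_neg ht.not_ge, sub_self, abs_zero]
    refine integral_nonneg_of_ae ?_
    filter_upwards [hF] with m hm
    exact sub_nonneg.2 (inv_le_one_of_one_le₀ hm)

theorem exp_neg_mul_le_one_sub_mixCdf {t : ℝ} (ht : 0 ≤ t) :
    exp (-t) * (1 + t * ∫ m, (1 - m⁻¹) ∂F) ≤ 1 - mixCdf F t := by
  have hlin : exp (-t) * (1 + t * ∫ m, (1 - m⁻¹) ∂F)
      = ∫ m, exp (-t) * (1 + t * (1 - m⁻¹)) ∂F := by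
    rw [integral_const_mul, integral_add (integrable_const 1)
      ((integrable_one_sub_inv hF).const_mul t), integral_const_mul]
    simp
  rw [mixCdf_eq hF ht, sub_sub_cancel, hlin]
  exact integral_mono (((integrable_const 1).add
    ((integrable_one_sub_inv hF).const_mul t)).const_mul _)
    (integrable_exp_neg_div hF ht) (exp_neg_mul_le_exp_neg_div t)

end Mixture

/-- Lemma 4.4, boundedness: for `0 < q < 1` and `G ∈ 𝒢`, `G ≠ E`,
`−log((q/(1−q)) ‖G−E‖) ≤ T_q(G) ≤ ((1−q)/q) / ‖G−E‖`. -/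
theorem Tq_bounds (q : ℝ) (hq : 0 < q) (hq1 : q < 1) (G : ℝ → ℝ)
    (hG : G ∈ scaleMixtures) (hne : G ≠ Ecdf) :
    ENNReal.ofReal (-Real.log (q / (1 - q) * ksDist G Ecdf)) ≤ Tq q G ∧
    Tq q G ≤ ENNReal.ofReal ((1 - q) / q / ksDist G Ecdf) := by
  obtain ⟨F, ⟨_, hF⟩, rfl⟩ := hG
  have hbdd : BddAbove (range fun t => |mixCdf F t - Ecdf t|) :=
    ⟨_, forall_mem_range.2 (abs_mixCdf_sub_Ecdf_le hF)⟩
  refine ⟨ofReal_neg_log_le_Tq hq hq1 fun t ht => ?_,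
    Tq_le_ofReal hq hq1 (ksDist_pos hbdd hne) fun t ht => ?_⟩
  · have h := le_ksDist hbdd t
    rw [Ecdf, if_pos ht] at h
    linarith [neg_abs_le (mixCdf F t - (1 - exp (-t)))]
  · refine le_trans ?_ (exp_neg_mul_le_one_sub_mixCdf hF ht)
    gcongr
    exact ksDist_le (abs_mixCdf_sub_Ecdf_le hF)
end

section
/- Fix 0 < q < 1 and t_0 > log(1/q). Define the modulus of continuity ω*(ε; t_0) = sup{ |T_q(G′) − t_0| : G ∈ 𝒢 with T_q(G) = t_0, G′ a cdf on [0,∞) with ‖G − G′‖ ≤ ε }, where ‖·‖ denotes the Kolmogorov–Smirnov (sup-norm) distance. Then ω*(ε; t_0) ≤ (q/log(1/q)) · t_0 e^{t_0} · ε · (1 + o(1)) as ε → 0+. -/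
open MeasureTheory Filter Set
open scoped ENNReal

/-- A cdf of a distribution on `[0,∞)`. -/
def IsCdfOnNonneg (G : ℝ → ℝ) : Prop :=
  Monotone G ∧ (∀ t < 0, G t = 0) ∧ Tendsto G atTop (nhds 1)

/-- The modulus of continuity
`ω*(ε; t₀) = sup {|T_q(G') − t₀| : G ∈ 𝒢, T_q(G) = t₀, ‖G − G'‖ ≤ ε}`
(the absolute difference taken in `ℝ≥0∞` via truncated subtraction). -/
noncomputable def omegaStar (q t₀ ε : ℝ) : ℝ≥0∞ :=
  ⨆ P : {P : (ℝ → ℝ) × (ℝ → ℝ) //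
      P.1 ∈ scaleMixtures ∧ Tq q P.1 = ENNReal.ofReal t₀ ∧
      IsCdfOnNonneg P.2 ∧ ksDist P.1 P.2 ≤ ε},
    (Tq q P.1.2 - ENNReal.ofReal t₀) ⊔ (ENNReal.ofReal t₀ - Tq q P.1.2)

/-! Let `h(t) = ∫ e^{t (1 - 1/m)} dF(m)` be the mgf of the rate gap `1 - 1/m ∈ [0, 1]`. Then
`1 - G(t) = e^{-t} h(t)`, so `T_q(G)` is the first time `h` reaches `1/q`, and `h(t₀) = 1/q`.
Jensen's inequality for `x log x` gives `t₀ h'(t₀) ≥ (1/q) log(1/q)`, whence by convexity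
`h(t₀ + δ) ≥ 1/q + δ log(1/q) / (q t₀)` and `h(t₀ - δ) ≤ 1/q - δ log(1/q) / (q t₀) + δ²/q`.
A perturbation of size `ε` in Kolmogorov–Smirnov distance changes `e^{-t} h(t)` by at most `ε`,
i.e. `h` by at most `ε e^t`, so `T_q(G')` stays within `δ` of `t₀` as soon as
`δ ≳ q t₀ e^{t₀} ε / log(1/q)`. -/

open ProbabilityTheory Real Topology

lemma Real.exp_neg_le_one_sub_add_sq {x : ℝ} (hx : 0 ≤ x) : exp (-x) ≤ 1 - x + x ^ 2 := by
  have hinv : exp (-x) * exp x = 1 := by rw [← exp_add, neg_add_cancel, exp_zero]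
  nlinarith [add_one_le_exp x, exp_pos (-x), mul_nonneg (mul_nonneg hx hx) hx,
    mul_nonneg (exp_pos (-x)).le hx]

namespace ProbabilityTheory

variable {Ω : Type*} {mΩ : MeasurableSpace Ω} {μ : Measure Ω} {X : Ω → ℝ}

lemma monotone_mgf_of_nonneg (hX : 0 ≤ᵐ[μ] X)
    (hint : ∀ t, Integrable (fun ω ↦ exp (t * X ω)) μ) : Monotone (mgf X μ) := by
  intro s t hst
  refine integral_mono_ae (hint s) (hint t) ?_
  filter_upwards [hX] with ω hω using exp_le_exp.2 (mul_le_mul_of_nonneg_right hst hω)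

section FiniteMeasure

variable [IsFiniteMeasure μ]

lemma integrable_mul_exp_mul_of_mem_Icc (hXm : AEMeasurable X μ)
    (hX : ∀ᵐ ω ∂μ, X ω ∈ Icc 0 1) (t : ℝ) :
    Integrable (fun ω ↦ X ω * exp (t * X ω)) μ :=
  (integrable_exp_mul_of_mem_Icc hXm hX).bdd_mul hXm.aestronglyMeasurable (c := 1) <| by
    filter_upwards [hX] with ω hω
    rw [Real.norm_eq_abs, abs_of_nonneg hω.1]
    exact hω.2

lemma mgf_add_mul_le_mgf_add (hXm : AEMeasurable X μ) (hX : ∀ᵐ ω ∂μ, X ω ∈ Icc 0 1)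
    (t δ : ℝ) :
    mgf X μ t + δ * μ[fun ω ↦ X ω * exp (t * X ω)] ≤ mgf X μ (t + δ) := by
  rw [mgf, mgf, ← integral_const_mul, ← integral_add (integrable_exp_mul_of_mem_Icc hXm hX)
    ((integrable_mul_exp_mul_of_mem_Icc hXm hX t).const_mul δ)]
  refine integral_mono ((integrable_exp_mul_of_mem_Icc hXm hX).add
    ((integrable_mul_exp_mul_of_mem_Icc hXm hX t).const_mul δ))
    (integrable_exp_mul_of_mem_Icc hXm hX) fun ω ↦ ?_
  have := add_one_le_exp (δ * X ω)
  rw [add_mul, exp_add]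
  nlinarith [exp_pos (t * X ω)]

lemma mgf_sub_le (hXm : AEMeasurable X μ) (hX : ∀ᵐ ω ∂μ, X ω ∈ Icc 0 1) (t : ℝ) {δ : ℝ}
    (hδ : 0 ≤ δ) :
    mgf X μ (t - δ) ≤ (1 + δ ^ 2) * mgf X μ t - δ * μ[fun ω ↦ X ω * exp (t * X ω)] := by
  rw [mgf, mgf, ← integral_const_mul, ← integral_const_mul, ← integral_sub
    ((integrable_exp_mul_of_mem_Icc hXm hX).const_mul _)
    ((integrable_mul_exp_mul_of_mem_Icc hXm hX t).const_mul δ)]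
  refine integral_mono_ae (integrable_exp_mul_of_mem_Icc hXm hX)
    (((integrable_exp_mul_of_mem_Icc hXm hX).const_mul _).sub
    ((integrable_mul_exp_mul_of_mem_Icc hXm hX t).const_mul δ)) ?_
  filter_upwards [hX] with ω ⟨h0, h1⟩
  have hquad := exp_neg_le_one_sub_add_sq (mul_nonneg hδ h0)
  have hsq : (δ * X ω) ^ 2 ≤ δ ^ 2 := by
    rw [mul_pow]; exact mul_le_of_le_one_right (sq_nonneg δ) (pow_le_one₀ h0 h1)
  rw [sub_mul, sub_eq_add_neg, exp_add]
  nlinarith [mul_le_mul_of_nonneg_left hquad (exp_pos (t * X ω)).le, exp_pos (t * X ω)]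

end FiniteMeasure

variable [IsProbabilityMeasure μ]

lemma mgf_mul_log_mgf_le (hXm : AEMeasurable X μ) (hX : ∀ᵐ ω ∂μ, X ω ∈ Icc 0 1) (t : ℝ) :
    mgf X μ t * log (mgf X μ t) ≤ t * μ[fun ω ↦ X ω * exp (t * X ω)] := by
  have hJensen := convexOn_mul_log.map_integral_le continuous_mul_log.continuousOn isClosed_Ici
    (ae_of_all _ fun ω ↦ (exp_pos (t * X ω)).le) (integrable_exp_mul_of_mem_Icc hXm hX (t := t))
    (((integrable_mul_exp_mul_of_mem_Icc hXm hX t).const_mul t).congr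
      (ae_of_all _ fun ω ↦ by simp only [Function.comp, log_exp]; ring))
  rw [← integral_const_mul]
  simpa only [mgf, log_exp, mul_comm, mul_left_comm, mul_assoc] using hJensen

lemma le_mgf_add_of_mgf_eq (hXm : AEMeasurable X μ) (hX : ∀ᵐ ω ∂μ, X ω ∈ Icc 0 1) {t c : ℝ}
    (ht : 0 < t) (hc : mgf X μ t = c) {δ : ℝ} (hδ : 0 ≤ δ) :
    c + δ * (c * log c / t) ≤ mgf X μ (t + δ) := by
  have hent : c * log c / t ≤ μ[fun ω ↦ X ω * exp (t * X ω)] :=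
    (div_le_iff₀' ht).2 (hc ▸ mgf_mul_log_mgf_le hXm hX t)
  calc c + δ * (c * log c / t) ≤ mgf X μ t + δ * μ[fun ω ↦ X ω * exp (t * X ω)] := by
        rw [hc]; gcongr
    _ ≤ mgf X μ (t + δ) := mgf_add_mul_le_mgf_add hXm hX t δ

lemma mgf_sub_le_of_mgf_eq (hXm : AEMeasurable X μ) (hX : ∀ᵐ ω ∂μ, X ω ∈ Icc 0 1) {t c : ℝ}
    (ht : 0 < t) (hc : mgf X μ t = c) {δ : ℝ} (hδ : 0 ≤ δ) :
    mgf X μ (t - δ) ≤ (1 + δ ^ 2) * c - δ * (c * log c / t) := by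
  have hent : c * log c / t ≤ μ[fun ω ↦ X ω * exp (t * X ω)] :=
    (div_le_iff₀' ht).2 (hc ▸ mgf_mul_log_mgf_le hXm hX t)
  calc mgf X μ (t - δ) ≤ (1 + δ ^ 2) * mgf X μ t - δ * μ[fun ω ↦ X ω * exp (t * X ω)] :=
        mgf_sub_le hXm hX t hδ
    _ ≤ (1 + δ ^ 2) * c - δ * (c * log c / t) := by rw [hc]; gcongr

end ProbabilityTheory

lemma Continuous.apply_eq_of_sInf_ofReal_eq {h : ℝ → ℝ} (hh : Continuous h) {c t₀ : ℝ}
    (ht₀ : 0 < t₀) (hT : sInf (ENNReal.ofReal '' (Ici 0 ∩ h ⁻¹' Ici c)) = ENNReal.ofReal t₀) :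
    h t₀ = c := by
  set S := Ici 0 ∩ h ⁻¹' Ici c
  have hS : IsClosed S := isClosed_Ici.inter (isClosed_Ici.preimage hh)
  have hbdd : BddBelow S := ⟨0, fun t ht ↦ ht.1⟩
  have hne : S.Nonempty := by
    by_contra hempty
    rw [not_nonempty_iff_eq_empty.1 hempty] at hT
    simp at hT
  have hsInf : sInf S = t₀ := by
    rw [← ENNReal.ofReal_mono.map_csInf_of_continuousAt ENNReal.continuous_ofReal.continuousAt
      hne hbdd] at hT
    exact (ENNReal.ofReal_eq_ofReal_iff (Real.sInf_nonneg fun t ht ↦ ht.1) ht₀.le).1 hT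
  refine le_antisymm ?_ (hsInf ▸ hS.csInf_mem hne hbdd).2
  have hbelow : Ico 0 t₀ ⊆ h ⁻¹' Iic c := fun t ht ↦ show h t ≤ c from le_of_not_gt fun hct ↦
    notMem_of_lt_csInf (hsInf ▸ ht.2) hbdd ⟨ht.1, hct.le⟩
  have := (isClosed_Iic.preimage hh).closure_subset_iff.2 hbelow
  rw [closure_Ico ht₀.ne] at this
  exact this ⟨ht₀.le, le_rfl⟩

section ScaleMixture

variable {F : Measure ℝ}

noncomputable def rateGap (m : ℝ) : ℝ := 1 - m⁻¹

lemma measurable_rateGap : Measurable rateGap :=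
  measurable_const.sub measurable_inv

lemma rateGap_mem_Icc {m : ℝ} (hm : 1 ≤ m) : rateGap m ∈ Icc 0 1 :=
  ⟨sub_nonneg.2 (inv_le_one_of_one_le₀ hm), sub_le_self _ (inv_nonneg.2 (zero_le_one.trans hm))⟩

lemma ae_rateGap_mem_Icc (hF : F ∈ mixSet) : ∀ᵐ m ∂F, rateGap m ∈ Icc 0 1 :=
  hF.2.mono fun _ ↦ rateGap_mem_Icc

lemma mixCdf_eq_one_sub_exp_mul_mgf (hF : F ∈ mixSet) {t : ℝ} (ht : 0 ≤ t) :
    mixCdf F t = 1 - exp (-t) * mgf rateGap F t := by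
  have := hF.1
  have hexp : (fun m ↦ exp (-t / m)) = fun m ↦ exp (-t) * exp (t * rateGap m) := by
    ext m; rw [← exp_add, rateGap]; ring_nf
  simp only [mixCdf, if_pos ht]
  rw [integral_sub (integrable_const 1) (hexp ▸ (integrable_exp_mul_of_mem_Icc
    measurable_rateGap.aemeasurable (ae_rateGap_mem_Icc hF)).const_mul _), hexp,
    integral_const_mul, mgf]
  simp

lemma mixCdf_mem_Icc (hF : F ∈ mixSet) (t : ℝ) : mixCdf F t ∈ Icc 0 1 := by
  have := hF.1
  rcases lt_or_ge t 0 with ht | ht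
  · simp [mixCdf, not_le.2 ht]
  have hmgf : mgf rateGap F t ≤ exp t := by
    simpa [mgf_const] using mgf_mono_of_nonneg (Y := fun _ ↦ 1)
      ((ae_rateGap_mem_Icc hF).mono fun _ h ↦ h.2) ht (integrable_const _)
  rw [mixCdf_eq_one_sub_exp_mul_mgf hF ht]
  constructor
  · have : exp (-t) * exp t = 1 := by rw [← exp_add, neg_add_cancel, exp_zero]
    nlinarith [exp_pos (-t)]
  · nlinarith [exp_pos (-t), mgf_nonneg (X := rateGap) (μ := F) (t := t)]

lemma Tq_mixCdf (hF : F ∈ mixSet) (q : ℝ) :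
    Tq q (mixCdf F) = sInf (ENNReal.ofReal '' (Ici 0 ∩ mgf rateGap F ⁻¹' Ici q⁻¹)) := by
  unfold Tq
  congr 2
  ext t
  simp only [mem_ofPred_eq, mem_inter_iff, mem_Ici, mem_preimage, and_congr_right_iff]
  intro ht
  rw [mixCdf_eq_one_sub_exp_mul_mgf hF ht, sub_sub_cancel, div_eq_mul_inv,
    mul_le_mul_iff_of_pos_left (exp_pos _)]

lemma Tq_le_ofReal_s14 {q t : ℝ} {G : ℝ → ℝ} (ht : 0 ≤ t) (h : exp (-t) / q ≤ 1 - G t) :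
    Tq q G ≤ ENNReal.ofReal t :=
  sInf_le ⟨t, ⟨ht, h⟩, rfl⟩

lemma ofReal_le_Tq {q s : ℝ} {G : ℝ → ℝ} (h : ∀ t, 0 ≤ t → exp (-t) / q ≤ 1 - G t → s ≤ t) :
    ENNReal.ofReal s ≤ Tq q G :=
  le_sInf <| by
    rintro _ ⟨t, ⟨ht, hG⟩, rfl⟩
    exact ENNReal.ofReal_le_ofReal (h t ht hG)

lemma IsCdfOnNonneg.mem_Icc {G : ℝ → ℝ} (hG : IsCdfOnNonneg G) (t : ℝ) : G t ∈ Icc 0 1 :=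
  ⟨(hG.2.1 (min t (-1)) (by simp)).symm.trans_le (hG.1 (min_le_left _ _)),
    hG.1.ge_of_tendsto hG.2.2 t⟩

lemma abs_sub_le_ksDist {G G' : ℝ → ℝ} (hG : ∀ t, G t ∈ Icc 0 1) (hG' : ∀ t, G' t ∈ Icc 0 1)
    (t : ℝ) : |G t - G' t| ≤ ksDist G G' := by
  refine le_ciSup (f := fun t ↦ |G t - G' t|) ⟨1, ?_⟩ t
  rintro _ ⟨s, rfl⟩
  rw [abs_sub_le_iff]
  constructor <;> linarith [(hG s).1, (hG s).2, (hG' s).1, (hG' s).2]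

section Perturbation

variable {q t₀ ε δ : ℝ} {G' : ℝ → ℝ}

lemma mgf_rateGap_eq_inv_of_Tq_eq (hF : F ∈ mixSet) (ht₀ : 0 < t₀)
    (hT : Tq q (mixCdf F) = ENNReal.ofReal t₀) : mgf rateGap F t₀ = q⁻¹ := by
  have := hF.1
  exact (continuous_mgf fun _ ↦ integrable_exp_mul_of_mem_Icc measurable_rateGap.aemeasurable
    (ae_rateGap_mem_Icc hF)).apply_eq_of_sInf_ofReal_eq ht₀ (Tq_mixCdf hF q ▸ hT)

lemma Tq_le_ofReal_add_of_ksDist_le (hF : F ∈ mixSet) (ht₀ : 0 < t₀)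
    (hT : Tq q (mixCdf F) = ENNReal.ofReal t₀) (hG' : IsCdfOnNonneg G')
    (hks : ksDist (mixCdf F) G' ≤ ε) (hδ : 0 ≤ δ)
    (hεδ : ε * exp (t₀ + δ) ≤ δ * (q⁻¹ * log q⁻¹ / t₀)) :
    Tq q G' ≤ ENNReal.ofReal (t₀ + δ) := by
  have := hF.1
  set s := t₀ + δ
  have hs : 0 ≤ s := by positivity
  have hmgf := le_mgf_add_of_mgf_eq measurable_rateGap.aemeasurable (ae_rateGap_mem_Icc hF) ht₀
    (mgf_rateGap_eq_inv_of_Tq_eq hF ht₀ hT) hδ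
  have hG's := (abs_le.1 ((abs_sub_le_ksDist (mixCdf_mem_Icc hF) hG'.mem_Icc s).trans hks)).1
  rw [mixCdf_eq_one_sub_exp_mul_mgf hF hs] at hG's
  have hε : ε ≤ exp (-s) * (δ * (q⁻¹ * log q⁻¹ / t₀)) := by
    calc ε = exp (-s) * (ε * exp s) := by
          rw [mul_left_comm, ← exp_add, neg_add_cancel, exp_zero, mul_one]
      _ ≤ _ := by gcongr
  refine Tq_le_ofReal_s14 hs ?_
  calc exp (-s) / q = exp (-s) * (q⁻¹ + δ * (q⁻¹ * log q⁻¹ / t₀))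
        - exp (-s) * (δ * (q⁻¹ * log q⁻¹ / t₀)) := by ring
    _ ≤ exp (-s) * mgf rateGap F s - ε := by gcongr
    _ ≤ 1 - G' s := by linarith

lemma ofReal_sub_le_Tq_of_ksDist_le (hF : F ∈ mixSet) (ht₀ : 0 < t₀)
    (hT : Tq q (mixCdf F) = ENNReal.ofReal t₀) (hG' : IsCdfOnNonneg G')
    (hks : ksDist (mixCdf F) G' ≤ ε) (hε : 0 < ε) (hδ : 0 ≤ δ)
    (hεδ : ε * exp t₀ ≤ δ * (q⁻¹ * log q⁻¹ / t₀) - δ ^ 2 * q⁻¹) :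
    ENNReal.ofReal (t₀ - δ) ≤ Tq q G' := by
  have := hF.1
  have hXm := measurable_rateGap.aemeasurable (μ := F)
  have hX := ae_rateGap_mem_Icc hF
  refine ofReal_le_Tq fun t ht hG't ↦ le_of_not_gt fun hlt ↦ ?_
  have hmgf : mgf rateGap F t ≤ q⁻¹ - ε * exp t₀ := by
    have := mgf_sub_le_of_mgf_eq hXm hX ht₀ (mgf_rateGap_eq_inv_of_Tq_eq hF ht₀ hT) hδ
    have := monotone_mgf_of_nonneg (hX.mono fun _ h ↦ h.1)
      (fun _ ↦ integrable_exp_mul_of_mem_Icc hXm hX) hlt.le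
    linarith
  have hG't' := (abs_le.1 ((abs_sub_le_ksDist (mixCdf_mem_Icc hF) hG'.mem_Icc t).trans hks)).2
  rw [mixCdf_eq_one_sub_exp_mul_mgf hF ht] at hG't'
  have hgrowth : 1 < exp (-t) * exp t₀ := by
    rw [← exp_add]; exact one_lt_exp_iff.2 (by linarith)
  have : exp (-t) * mgf rateGap F t + ε < exp (-t) / q := by
    calc exp (-t) * mgf rateGap F t + ε ≤ exp (-t) * (q⁻¹ - ε * exp t₀) + ε := by gcongr
      _ = exp (-t) / q - ε * (exp (-t) * exp t₀ - 1) := by ring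
      _ < exp (-t) / q := sub_lt_self _ (mul_pos hε (by linarith))
  linarith

end Perturbation

end ScaleMixture

lemma omegaStar_le_ofReal_of_le {q t₀ ε δ : ℝ} (ht₀ : 0 < t₀) (hε : 0 < ε) (hδ : 0 ≤ δ)
    (hεδ_add : ε * exp (t₀ + δ) ≤ δ * (q⁻¹ * log q⁻¹ / t₀))
    (hεδ_sub : ε * exp t₀ ≤ δ * (q⁻¹ * log q⁻¹ / t₀) - δ ^ 2 * q⁻¹) :
    omegaStar q t₀ ε ≤ ENNReal.ofReal δ := by
  refine iSup_le ?_
  rintro ⟨⟨G, G'⟩, ⟨F, hF, hGF⟩, hT, hG', hks⟩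
  dsimp only at hT hG' hks ⊢
  subst hGF
  refine sup_le (tsub_le_iff_right.2 ?_) (tsub_le_iff_right.2 ?_)
  · calc Tq q G' ≤ ENNReal.ofReal (t₀ + δ) :=
          Tq_le_ofReal_add_of_ksDist_le hF ht₀ hT hG' hks hδ hεδ_add
      _ ≤ ENNReal.ofReal δ + ENNReal.ofReal t₀ := add_comm t₀ δ ▸ ENNReal.ofReal_add_le
  · calc ENNReal.ofReal t₀ = ENNReal.ofReal (δ + (t₀ - δ)) := by rw [add_sub_cancel]
      _ ≤ ENNReal.ofReal δ + ENNReal.ofReal (t₀ - δ) := ENNReal.ofReal_add_le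
      _ ≤ ENNReal.ofReal δ + Tq q G' := by
          gcongr; exact ofReal_sub_le_Tq_of_ksDist_le hF ht₀ hT hG' hks hε hδ hεδ_sub

lemma eventually_omegaStar_le {q t₀ a : ℝ} (hq : 0 < q) (hL : 0 < log (1 / q)) (ht₀ : 0 < t₀)
    (ha : 1 < a) : ∀ᶠ ε in 𝓝[>] 0,
      omegaStar q t₀ ε ≤ ENNReal.ofReal (a * (q / log (1 / q) * t₀ * exp t₀ * ε)) := by
  set C := q / log (1 / q) * t₀ * exp t₀
  have hC : 0 < C := by positivity
  have hexp : ∀ᶠ ε in 𝓝[>] (0 : ℝ), exp (a * (C * ε)) < a :=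
    (((by fun_prop : Continuous fun ε ↦ exp (a * (C * ε))).tendsto' 0 1 (by simp)).mono_left
      nhdsWithin_le_nhds).eventually_lt_const ha
  have hsq : ∀ᶠ ε in 𝓝[>] (0 : ℝ), ε * (a * C) ^ 2 * q⁻¹ < (a - 1) * exp t₀ :=
    (((by fun_prop : Continuous fun ε ↦ ε * (a * C) ^ 2 * q⁻¹).tendsto' 0 0 (by simp)).mono_left
      nhdsWithin_le_nhds).eventually_lt_const (by have := exp_pos t₀; nlinarith)
  filter_upwards [self_mem_nhdsWithin, hexp, hsq] with ε (hε : 0 < ε) hexpε hsqε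
  set δ := a * (C * ε)
  have hδκ : δ * (q⁻¹ * log q⁻¹ / t₀) = a * (ε * exp t₀) := by
    rw [← one_div]
    simp only [δ, C]
    field_simp
  refine omegaStar_le_ofReal_of_le ht₀ hε (by positivity) ?_ ?_
  · calc ε * exp (t₀ + δ) = ε * exp t₀ * exp δ := by rw [exp_add, mul_assoc]
      _ ≤ ε * exp t₀ * a := by gcongr
      _ = _ := by rw [hδκ]; ring
  · have : δ ^ 2 * q⁻¹ ≤ ε * ((a - 1) * exp t₀) := by
      calc δ ^ 2 * q⁻¹ = ε * (ε * (a * C) ^ 2 * q⁻¹) := by ring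
        _ ≤ _ := by gcongr
    rw [hδκ]
    linarith

/-- Lemma 4.5, modulus of continuity: for `0 < q < 1` and
`t₀ > log(1/q)`, `ω*(ε; t₀) ≤ (q/log(1/q)) t₀ e^{t₀} ε (1 + o(1))` as `ε → 0+`, i.e. the
`limsup` as `ε → 0+` of `ω*(ε; t₀) / ((q/log(1/q)) t₀ e^{t₀} ε)` is at most `1`. -/
theorem omegaStar_modulus (q t₀ : ℝ) (hq : 0 < q) (hq1 : q < 1)
    (ht₀ : Real.log (1 / q) < t₀) :
    limsup (fun ε : ℝ =>
        omegaStar q t₀ ε / ENNReal.ofReal (q / Real.log (1 / q) * t₀ * Real.exp t₀ * ε))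
      (nhdsWithin 0 (Set.Ioi 0)) ≤ 1 := by
  have hL : 0 < log (1 / q) := log_pos ((one_lt_div hq).2 hq1)
  have ht₀pos : 0 < t₀ := hL.trans ht₀
  refine ENNReal.le_of_forall_pos_le_add fun η hη _ ↦ ?_
  have ha : 1 < 1 + (η : ℝ) := by simpa using hη
  calc _ ≤ ENNReal.ofReal (1 + (η : ℝ)) := limsup_le_of_le (by isBoundedDefault) <|
        (eventually_omegaStar_le hq hL ht₀pos ha).mono fun ε hε ↦
          ENNReal.div_le_of_le_mul (hε.trans_eq (ENNReal.ofReal_mul (by positivity)))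
    _ = 1 + η := by
        rw [ENNReal.ofReal_add zero_le_one η.coe_nonneg, ENNReal.ofReal_one,
          ENNReal.ofReal_coe_nnreal]
end

section
/- Fix 0 < q < 1. Let ψ be a measurable function on [1,∞) with ψ ≥ 0, ψ not identically 0, and c := sup_{μ ≥ 1} ψ(μ)/μ < ∞. Let G = E#F ∈ 𝒢 and let 0 < τ < T_q(G) (with the convention e^{-∞/μ} = 0 if T_q(G) = +∞). Then ∫ ψ(μ) ( e^{-τ/μ} − e^{-T_q(G)/μ} ) dF(μ) ≤ (c/q) · τ e^{-τ} / (1 − e^{-τ}). -/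
open MeasureTheory Filter Set
open scoped ENNReal

/-- `e^{−t/μ}` for an extended threshold `t`, with the convention `e^{−∞/μ} = 0`. -/
noncomputable def survAt (t : ℝ≥0∞) (m : ℝ) : ℝ :=
  if t = ⊤ then 0 else Real.exp (-t.toReal / m)

lemma expMeas (t : ℝ) : Measurable fun m : ℝ => Real.exp (-t / m) :=
  Real.measurable_exp.comp (measurable_const.div measurable_id)

lemma expInt (F : Measure ℝ) (hF : F ∈ mixSet) (t : ℝ) (ht : 0 ≤ t) :
    Integrable (fun m => Real.exp (-t / m)) F := by
  haveI := hF.1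
  apply Integrable.mono' (integrable_const 1) (expMeas t).aestronglyMeasurable
  filter_upwards [hF.2] with m hm
  rw [Real.norm_eq_abs, abs_of_pos (Real.exp_pos _)]
  apply Real.exp_le_one_iff.mpr
  apply div_nonpos_of_nonpos_of_nonneg (by linarith) (by linarith)

lemma constraint (q : ℝ) (hq : 0 < q) (F : Measure ℝ) (hF : F ∈ mixSet)
    (t : ℝ) (ht : 0 ≤ t) (hlt : ENNReal.ofReal t < Tq q (mixCdf F)) :
    ∫ m, Real.exp (-t / m) ∂F ≤ Real.exp (-t) / q := by
  haveI := hF.1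
  by_contra hcon
  push_neg at hcon
  have hmem : t ∈ {t : ℝ | 0 ≤ t ∧ Real.exp (-t) / q ≤ 1 - mixCdf F t} := by
    refine ⟨ht, ?_⟩
    have h1 : mixCdf F t = ∫ m, (1 - Real.exp (-t / m)) ∂F := if_pos ht
    have h2 : ∫ m, (1 - Real.exp (-t / m)) ∂F =
        1 - ∫ m, Real.exp (-t / m) ∂F := by
      rw [integral_sub (integrable_const 1) (expInt F hF t ht)]
      simp
    rw [h1, h2]
    linarith [hcon.le]
  have : Tq q (mixCdf F) ≤ ENNReal.ofReal t := sInf_le ⟨t, hmem, rfl⟩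
  exact absurd hlt (not_lt.mpr this)

lemma increment (q : ℝ) (hq : 0 < q)
    (ψ : ℝ → ℝ) (hψmeas : Measurable ψ) (hψnonneg : ∀ m, 1 ≤ m → 0 ≤ ψ m)
    (c : ℝ) (hc0 : 0 ≤ c) (hcub : ∀ m, 1 ≤ m → ψ m ≤ c * m)
    (F : Measure ℝ) (hF : F ∈ mixSet)
    (τ : ℝ) (hτ : 0 < τ)
    (t : ℝ) (ht : 0 ≤ t) (hlt : ENNReal.ofReal t < Tq q (mixCdf F)) :
    ∫⁻ m, ENNReal.ofReal (ψ m * (Real.exp (-t / m) - Real.exp (-(t + τ) / m))) ∂F ≤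
      ENNReal.ofReal (c * τ / q * Real.exp (-t)) := by
  haveI := hF.1
  have key : ∀ m : ℝ, 1 ≤ m →
      ψ m * (Real.exp (-t / m) - Real.exp (-(t + τ) / m)) ≤ c * τ * Real.exp (-t / m) := by
    intro m hm
    have hm0 : (0:ℝ) < m := by linarith
    have e1 : Real.exp (-(t + τ) / m) = Real.exp (-t / m) * Real.exp (-τ / m) := by
      rw [← Real.exp_add]
      congr 1
      field_simp
      ring
    have hA : (0:ℝ) < Real.exp (-t / m) := Real.exp_pos _
    have hB1 : Real.exp (-τ / m) ≤ 1 := Real.exp_le_one_iff.mpr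
      (div_nonpos_of_nonpos_of_nonneg (by linarith) hm0.le)
    have hBlin : m * (1 - Real.exp (-τ / m)) ≤ τ := by
      have h := Real.add_one_le_exp (-τ / m)
      have hnd : -τ/m = -(τ/m) := neg_div m τ
      have : 1 - Real.exp (-τ / m) ≤ τ / m := by linarith
      calc m * (1 - Real.exp (-τ / m)) ≤ m * (τ / m) :=
            mul_le_mul_of_nonneg_left this hm0.le
        _ = τ := by field_simp
    have hψc := hcub m hm
    have hψ0 := hψnonneg m hm
    have hdiff : Real.exp (-t / m) - Real.exp (-(t + τ) / m)
        = Real.exp (-t / m) * (1 - Real.exp (-τ / m)) := by rw [e1]; ring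
    rw [hdiff]
    have h1 : ψ m * (Real.exp (-t / m) * (1 - Real.exp (-τ / m)))
        ≤ c * m * (Real.exp (-t / m) * (1 - Real.exp (-τ / m))) := by
      apply mul_le_mul_of_nonneg_right hψc
      exact mul_nonneg hA.le (by linarith)
    have h2 : c * m * (Real.exp (-t / m) * (1 - Real.exp (-τ / m)))
        ≤ c * τ * Real.exp (-t / m) := by
      have := mul_le_mul_of_nonneg_left hBlin (mul_nonneg hc0 hA.le)
      nlinarith
    linarith
  calc ∫⁻ m, ENNReal.ofReal (ψ m * (Real.exp (-t / m) - Real.exp (-(t + τ) / m))) ∂F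
      ≤ ∫⁻ m, ENNReal.ofReal (c * τ) * ENNReal.ofReal (Real.exp (-t / m)) ∂F := by
        apply lintegral_mono_ae
        filter_upwards [hF.2] with m hm
        rw [← ENNReal.ofReal_mul (by positivity)]
        exact ENNReal.ofReal_le_ofReal (key m hm)
    _ = ENNReal.ofReal (c * τ) * ∫⁻ m, ENNReal.ofReal (Real.exp (-t / m)) ∂F :=
        lintegral_const_mul _ (expMeas t).ennreal_ofReal
    _ ≤ ENNReal.ofReal (c * τ) * ENNReal.ofReal (Real.exp (-t) / q) := by
        gcongr
        rw [← ofReal_integral_eq_lintegral_ofReal (expInt F hF t ht)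
          (Eventually.of_forall fun m => (Real.exp_pos _).le)]
        exact ENNReal.ofReal_le_ofReal (constraint q hq F hF t ht hlt)
    _ = ENNReal.ofReal (c * τ / q * Real.exp (-t)) := by
        rw [← ENNReal.ofReal_mul (by positivity)]
        congr 1
        field_simp

lemma sumbound (q : ℝ) (hq : 0 < q)
    (ψ : ℝ → ℝ) (hψmeas : Measurable ψ) (hψnonneg : ∀ m, 1 ≤ m → 0 ≤ ψ m)
    (c : ℝ) (hc0 : 0 ≤ c) (hcub : ∀ m, 1 ≤ m → ψ m ≤ c * m)
    (F : Measure ℝ) (hF : F ∈ mixSet)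
    (τ : ℝ) (hτ : 0 < τ) (N : ℕ)
    (hN : ∀ k < N, ENNReal.ofReal (((k:ℝ) + 1) * τ) < Tq q (mixCdf F)) :
    ∫⁻ m, ENNReal.ofReal
        (ψ m * (Real.exp (-τ / m) - Real.exp (-(((N:ℝ) + 1) * τ) / m))) ∂F ≤
      ENNReal.ofReal (c / q * τ * Real.exp (-τ) / (1 - Real.exp (-τ))) := by
  haveI := hF.1
  set f : ℕ → ℝ → ℝ := fun k m => Real.exp (-(((k:ℝ) + 1) * τ) / m) with hf
  have hmeask : ∀ k : ℕ, Measurable fun m =>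
      ENNReal.ofReal (ψ m * (f k m - f (k + 1) m)) := by
    intro k
    exact (hψmeas.mul ((expMeas _).sub (expMeas _))).ennreal_ofReal
  have htele : ∀ m : ℝ, ψ m * (Real.exp (-τ / m) - Real.exp (-(((N:ℝ) + 1) * τ) / m))
      = ∑ k ∈ Finset.range N, ψ m * (f k m - f (k + 1) m) := by
    intro m
    rw [← Finset.mul_sum, Finset.sum_range_sub' (f := fun k => f k m)]
    simp [hf]
  calc ∫⁻ m, ENNReal.ofReal
        (ψ m * (Real.exp (-τ / m) - Real.exp (-(((N:ℝ) + 1) * τ) / m))) ∂F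
      = ∫⁻ m, ∑ k ∈ Finset.range N, ENNReal.ofReal (ψ m * (f k m - f (k + 1) m)) ∂F := by
        apply lintegral_congr_ae
        filter_upwards [hF.2] with m hm
        rw [htele m, ENNReal.ofReal_sum_of_nonneg]
        intro k _
        apply mul_nonneg (hψnonneg m hm)
        have hm0 : (0:ℝ) < m := by linarith
        simp only [hf, sub_nonneg]
        apply Real.exp_le_exp.mpr
        apply (div_le_div_iff_of_pos_right hm0).mpr
        push_cast
        nlinarith
    _ = ∑ k ∈ Finset.range N, ∫⁻ m, ENNReal.ofReal (ψ m * (f k m - f (k + 1) m)) ∂F :=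
        lintegral_finset_sum _ fun k _ => hmeask k
    _ ≤ ∑ k ∈ Finset.range N, ENNReal.ofReal (c * τ / q * Real.exp (-(((k:ℝ) + 1) * τ))) := by
        apply Finset.sum_le_sum
        intro k hk
        have harg : ∀ m : ℝ, f (k + 1) m = Real.exp (-((((k:ℝ) + 1) * τ) + τ) / m) := by
          intro m
          simp only [hf]
          congr 2
          push_cast
          ring
        have hb := increment q hq ψ hψmeas hψnonneg c hc0 hcub F hF τ hτ (((k:ℝ) + 1) * τ)
          (mul_nonneg (by positivity) hτ.le) (hN k (Finset.mem_range.mp hk))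
        have heq : ∀ m : ℝ, ψ m * (f k m - f (k + 1) m)
            = ψ m * (Real.exp (-(((k:ℝ) + 1) * τ) / m)
              - Real.exp (-((((k:ℝ) + 1) * τ) + τ) / m)) := by
          intro m
          rw [harg m]
        simp only [heq]
        exact hb
    _ ≤ ENNReal.ofReal (c / q * τ * Real.exp (-τ) / (1 - Real.exp (-τ))) := by
        have hE0 : (0:ℝ) ≤ Real.exp (-τ) := (Real.exp_pos _).le
        have hE1 : Real.exp (-τ) < 1 := by
          have := Real.exp_lt_exp.mpr (show -τ < 0 by linarith)
          rwa [Real.exp_zero] at this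
        have hsub : (0:ℝ) < 1 - Real.exp (-τ) := by linarith
        set r := ENNReal.ofReal (Real.exp (-τ)) with hr
        have hterm : ∀ k : ℕ, ENNReal.ofReal (c * τ / q * Real.exp (-(((k:ℝ) + 1) * τ)))
            = ENNReal.ofReal (c * τ / q) * r ^ (k + 1) := by
          intro k
          have hpow : Real.exp (-(((k:ℝ) + 1) * τ)) = Real.exp (-τ) ^ (k + 1) := by
            rw [← Real.exp_nat_mul]
            congr 1
            push_cast
            ring
          rw [hpow, ENNReal.ofReal_mul (by positivity), ENNReal.ofReal_pow hE0]
        simp only [hterm]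
        have hone : (1:ℝ≥0∞) - r = ENNReal.ofReal (1 - Real.exp (-τ)) := by
          rw [ENNReal.ofReal_sub _ hE0, ENNReal.ofReal_one]
        calc ∑ k ∈ Finset.range N, ENNReal.ofReal (c * τ / q) * r ^ (k + 1)
            ≤ ∑' k : ℕ, ENNReal.ofReal (c * τ / q) * r ^ (k + 1) :=
              ENNReal.sum_le_tsum _
          _ = ENNReal.ofReal (c * τ / q) * (r * ∑' k : ℕ, r ^ k) := by
              simp only [pow_succ']
              rw [ENNReal.tsum_mul_left, ENNReal.tsum_mul_left]
          _ = ENNReal.ofReal (c * τ / q) * (r * ENNReal.ofReal ((1 - Real.exp (-τ))⁻¹)) := by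
              rw [ENNReal.tsum_geometric, hone, ENNReal.ofReal_inv_of_pos hsub]
          _ = ENNReal.ofReal (c / q * τ * Real.exp (-τ) / (1 - Real.exp (-τ))) := by
              rw [hr, ← ENNReal.ofReal_mul hE0, ← ENNReal.ofReal_mul (by positivity)]
              congr 1
              field_simp

/-- Lemma 5.6: let `ψ ≥ 0` be measurable on `[1,∞)`, not identically `0`,
with `c = sup_{μ ≥ 1} ψ(μ)/μ < ∞`. Then for `G = E#F ∈ 𝒢` and `0 < τ < T_q(G)`,
`∫ ψ(μ)(e^{−τ/μ} − e^{−T_q(G)/μ}) dF(μ) ≤ (c/q) τ e^{−τ}/(1 − e^{−τ})`. -/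
theorem bias_increment_bound (q : ℝ) (hq : 0 < q) (hq1 : q < 1)
    (ψ : ℝ → ℝ) (hψmeas : Measurable ψ) (hψnonneg : ∀ m, 1 ≤ m → 0 ≤ ψ m)
    (hψne : ∃ m, 1 ≤ m ∧ ψ m ≠ 0)
    (c : ℝ) (hc : IsLUB {y | ∃ m, 1 ≤ m ∧ y = ψ m / m} c)
    (F : Measure ℝ) (hF : F ∈ mixSet)
    (τ : ℝ) (hτ : 0 < τ) (hτT : ENNReal.ofReal τ < Tq q (mixCdf F)) :
    ∫⁻ m, ENNReal.ofReal (ψ m * (Real.exp (-τ / m) - survAt (Tq q (mixCdf F)) m)) ∂F ≤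
      ENNReal.ofReal (c / q * τ * Real.exp (-τ) / (1 - Real.exp (-τ))) := by
  classical
  haveI := hF.1
  obtain ⟨m0, hm01, hψm0⟩ := hψne
  have hc0 : 0 ≤ c :=
    le_trans (div_nonneg (hψnonneg m0 hm01) (by linarith)) (hc.1 ⟨m0, hm01, rfl⟩)
  have hcub : ∀ m, 1 ≤ m → ψ m ≤ c * m := by
    intro m hm
    have h := hc.1 ⟨m, hm, rfl⟩
    have hm0' : (0:ℝ) < m := by linarith
    calc ψ m = ψ m / m * m := by field_simp
      _ ≤ c * m := mul_le_mul_of_nonneg_right h hm0'.le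
  set T := Tq q (mixCdf F) with hT
  set R := ENNReal.ofReal (c / q * τ * Real.exp (-τ) / (1 - Real.exp (-τ))) with hR
  rcases eq_or_ne T ⊤ with hTtop | hTne
  · simp only [survAt, hTtop, if_true, sub_zero]
    set g : ℕ → ℝ → ℝ≥0∞ := fun N m =>
      ENNReal.ofReal (ψ m * (Real.exp (-τ / m) - Real.exp (-(((N:ℝ) + 1) * τ) / m))) with hg
    have hgmeas : ∀ N, Measurable (g N) := fun N =>
      (hψmeas.mul ((expMeas _).sub (expMeas _))).ennreal_ofReal
    have hlim : ∀ᵐ m ∂F, Tendsto (fun N => g N m) atTop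
        (nhds (ENNReal.ofReal (ψ m * Real.exp (-τ / m)))) := by
      filter_upwards [hF.2] with m hm
      have hm0 : (0:ℝ) < m := by linarith
      simp only [hg]
      apply ENNReal.tendsto_ofReal
      have h1 : Tendsto (fun N : ℕ => Real.exp (-(((N:ℝ) + 1) * τ) / m)) atTop (nhds 0) := by
        apply Real.tendsto_exp_atBot.comp
        have h0 : Tendsto (fun N : ℕ => ((N:ℝ) + 1)) atTop atTop :=
          tendsto_atTop_add_const_right atTop 1 tendsto_natCast_atTop_atTop
        have hinner : Tendsto (fun N : ℕ => ((N:ℝ) + 1) * (τ / m)) atTop atTop :=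
          h0.atTop_mul_const (by positivity)
        exact (tendsto_neg_atTop_atBot.comp hinner).congr fun N => by
          simp only [Function.comp_apply]; ring
      have h2 : Tendsto (fun N : ℕ => ψ m * (Real.exp (-τ / m)
            - Real.exp (-(((N:ℝ) + 1) * τ) / m))) atTop
          (nhds (ψ m * (Real.exp (-τ / m) - 0))) :=
        ((tendsto_const_nhds (x := Real.exp (-τ / m))).sub h1).const_mul (ψ m)
      simpa using h2
    have hkey : (fun m => ENNReal.ofReal (ψ m * Real.exp (-τ / m)))
        =ᵐ[F] fun m => liminf (fun N => g N m) atTop := by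
      filter_upwards [hlim] with m hm using hm.liminf_eq.symm
    rw [lintegral_congr_ae hkey]
    have hb : ∀ N : ℕ, ∫⁻ m, g N m ∂F ≤ R := fun N =>
      sumbound q hq ψ hψmeas hψnonneg c hc0 hcub F hF τ hτ N
        (fun k _ => by rw [← hT, hTtop]; exact ENNReal.ofReal_lt_top)
    calc ∫⁻ m, liminf (fun N => g N m) atTop ∂F
        ≤ liminf (fun N => ∫⁻ m, g N m ∂F) atTop := lintegral_liminf_le hgmeas
      _ ≤ liminf (fun _ : ℕ => R) atTop := liminf_le_liminf (Eventually.of_forall hb)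
      _ = R := liminf_const R
  · have hTr : T = ENNReal.ofReal T.toReal := (ENNReal.ofReal_toReal hTne).symm
    obtain ⟨M, hM⟩ := exists_nat_ge (T.toReal / τ)
    have hex : ∃ n : ℕ, T ≤ ENNReal.ofReal (((n:ℝ) + 1) * τ) := by
      refine ⟨M, ?_⟩
      conv_lhs => rw [hTr]
      apply ENNReal.ofReal_le_ofReal
      rw [div_le_iff₀ hτ] at hM
      nlinarith [hτ.le]
    set N0 := Nat.find hex with hN0
    have hspec : T ≤ ENNReal.ofReal (((N0:ℝ) + 1) * τ) := Nat.find_spec hex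
    have hmin : ∀ k < N0, ENNReal.ofReal (((k:ℝ) + 1) * τ) < T := fun k hk =>
      not_le.mp (Nat.find_min hex hk)
    have hTrle : T.toReal ≤ ((N0:ℝ) + 1) * τ := by
      rw [hTr] at hspec
      exact (ENNReal.ofReal_le_ofReal_iff (mul_nonneg (by positivity) hτ.le)).mp hspec
    calc ∫⁻ m, ENNReal.ofReal (ψ m * (Real.exp (-τ / m) - survAt T m)) ∂F
        ≤ ∫⁻ m, ENNReal.ofReal
            (ψ m * (Real.exp (-τ / m) - Real.exp (-(((N0:ℝ) + 1) * τ) / m))) ∂F := by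
          apply lintegral_mono_ae
          filter_upwards [hF.2] with m hm
          apply ENNReal.ofReal_le_ofReal
          have hm0 : (0:ℝ) < m := by linarith
          have hs : survAt T m = Real.exp (-T.toReal / m) := if_neg hTne
          rw [hs]
          apply mul_le_mul_of_nonneg_left ?_ (hψnonneg m hm)
          have hle : Real.exp (-(((N0:ℝ) + 1) * τ) / m) ≤ Real.exp (-T.toReal / m) := by
            apply Real.exp_le_exp.mpr
            apply (div_le_div_iff_of_pos_right hm0).mpr
            linarith
          linarith
      _ ≤ R := sumbound q hq ψ hψmeas hψnonneg c hc0 hcub F hF τ hτ N0 hmin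
end
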